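/- Let S be a nonempty finite set, f : S → ℝ, and T ⊆ S a nonempty subset such that every element of T has f-value at most every element of S \ T (∀ t ∈ T, ∀ s ∈ S \ T, f t ≤ f s). Then the average of f over T is at most the average of f over S: (1/|T|) Σ_{t ∈ T} f t ≤ (1/|S|) Σ_{s ∈ S} f s. -/
import Mathlib


open Finset

theorem avg_subset_le_avg_of_le
    {α : Type*} [DecidableEq α] (S : Finset α) (hS : S.Nonempty) (f : α → ℝ)
    (T : Finset α) (hTS : T ⊆ S) (hT : T.Nonempty)
    (hle : ∀ t ∈ T, ∀ s ∈ S \ T, f t ≤ f s) :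
    (1 / (T.card : ℝ)) * ∑ t ∈ T, f t
      ≤ (1 / (S.card : ℝ)) * ∑ s ∈ S, f s := by
  have hn : (0:ℝ) < T.card := by exact_mod_cast Finset.card_pos.mpr hT
  have hm : (0:ℝ) < S.card := by exact_mod_cast Finset.card_pos.mpr hS
  rw [one_div, one_div, inv_mul_eq_div, inv_mul_eq_div, div_le_div_iff₀ hn hm]
  have hsplit : ∑ s ∈ S, f s = ∑ t ∈ T, f t + ∑ s ∈ S \ T, f s := by
    rw [← Finset.sum_sdiff hTS]; ring
  have hcard : (S.card : ℝ) = T.card + (S \ T).card := by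
    rw [Finset.card_sdiff_of_subset hTS, Nat.cast_sub (Finset.card_le_card hTS)]
    ring
  rw [hsplit, hcard]
  have key : (∑ t ∈ T, f t) * (S \ T).card ≤ (∑ s ∈ S \ T, f s) * T.card := by
    have : ∀ s ∈ S \ T, (∑ t ∈ T, f t) ≤ (T.card : ℝ) * f s := by
      intro s hs
      calc (∑ t ∈ T, f t) ≤ ∑ _t ∈ T, f s :=
            Finset.sum_le_sum (fun t ht => hle t ht s hs)
        _ = (T.card : ℝ) * f s := by rw [Finset.sum_const]; push_cast [nsmul_eq_mul]; ring
    calc (∑ t ∈ T, f t) * (S \ T).card = ∑ _s ∈ S \ T, (∑ t ∈ T, f t) := by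
          rw [Finset.sum_const]; push_cast [nsmul_eq_mul]; ring
      _ ≤ ∑ s ∈ S \ T, (T.card : ℝ) * f s := Finset.sum_le_sum this
      _ = (∑ s ∈ S \ T, f s) * T.card := by rw [← Finset.mul_sum]; ring
  nlinarith [key]
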